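/- arXiv:1804.08004 — 7 statements merged into one kernel-verified Lean document; each statement's English description precedes it below -/
import Mathlib

section
/- Let S be a compact Hausdorff topological monoid that is zero-dimensional. Then every clopen subset L of S is recognizable: there exists a continuous monoid homomorphism φ : S → T onto a finite discrete monoid T with L = φ⁻¹(φ(L)). -/
open Set TopologicalSpace

/-- The syntactic congruence of a subset `L` of a monoid. -/
def synCon {S : Type*} [Monoid S] (L : Set S) : Con S where
  r s s' := ∀ x y : S, x * s * y ∈ L ↔ x * s' * y ∈ L
  iseqv := ⟨fun _ _ _ => Iff.rfl, fun h x y => (h x y).symm,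
    fun h1 h2 x y => (h1 x y).trans (h2 x y)⟩
  mul' := by
    intro a b c d h1 h2 w z
    have A : w * (a * c) * z ∈ L ↔ w * (b * c) * z ∈ L := by
      simpa [mul_assoc] using h1 w (c * z)
    have B : w * (b * c) * z ∈ L ↔ w * (b * d) * z ∈ L := by
      simpa [mul_assoc] using h2 (w * b) z
    exact A.trans B

theorem synCon_class_open {S : Type*} [Monoid S] [TopologicalSpace S]
    [CompactSpace S] [ContinuousMul S]
    (hzd : TopologicalSpace.IsTopologicalBasis {s : Set S | IsClopen s})
    (L : Set S) (hL : IsClopen L) (s : S) :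
    ∃ V : Set S, IsOpen V ∧ s ∈ V ∧ ∀ s' ∈ V, (synCon L) s' s := by
  have hg : Continuous (fun q : S × S × S => q.1 * q.2.1 * q.2.2) :=
    (continuous_fst.mul (continuous_snd.fst)).mul continuous_snd.snd
  have basis := (hzd.prod (hzd.prod hzd))
  have key : ∀ p : S × S, ∃ A B C : Set S, IsOpen A ∧ IsOpen B ∧ IsOpen C ∧
      p.1 ∈ A ∧ s ∈ B ∧ p.2 ∈ C ∧
      ∀ a ∈ A, ∀ b ∈ B, ∀ c ∈ C, (a * b * c ∈ L ↔ a * s * c ∈ L) := by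
    intro p
    by_cases hm : p.1 * s * p.2 ∈ L
    · obtain ⟨W, hW, hq0, hWsub⟩ := basis.exists_subset_of_mem_open
        (show (p.1, s, p.2) ∈ (fun q : S × S × S => q.1 * q.2.1 * q.2.2) ⁻¹' L from hm)
        (hL.2.preimage hg)
      obtain ⟨A, hA, V, hV, rfl⟩ := hW
      obtain ⟨B, hB, C, hC, rfl⟩ := hV
      obtain ⟨hq1, hq2, hq3⟩ := hq0
      refine ⟨A, B, C, hA.2, hB.2, hC.2, hq1, hq2, hq3, ?_⟩
      intro a ha b hb c hc
      constructor
      · intro _; exact hWsub (show (a, s, c) ∈ _ from ⟨ha, hq2, hc⟩)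
      · intro _; exact hWsub (show (a, b, c) ∈ _ from ⟨ha, hb, hc⟩)
    · obtain ⟨W, hW, hq0, hWsub⟩ := basis.exists_subset_of_mem_open
        (show (p.1, s, p.2) ∈ (fun q : S × S × S => q.1 * q.2.1 * q.2.2) ⁻¹' Lᶜ from hm)
        ((hL.compl.2).preimage hg)
      obtain ⟨A, hA, V, hV, rfl⟩ := hW
      obtain ⟨B, hB, C, hC, rfl⟩ := hV
      obtain ⟨hq1, hq2, hq3⟩ := hq0
      refine ⟨A, B, C, hA.2, hB.2, hC.2, hq1, hq2, hq3, ?_⟩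
      intro a ha b hb c hc
      constructor
      · intro h; exact absurd h (hWsub (show (a, b, c) ∈ _ from ⟨ha, hb, hc⟩))
      · intro h; exact absurd h (hWsub (show (a, s, c) ∈ _ from ⟨ha, hq2, hc⟩))
  choose A B C hA hB hC hpA hsB hpC hiff using key
  have hcover : (univ : Set (S × S)) ⊆ ⋃ p : S × S, A p ×ˢ C p := by
    intro p _; exact mem_iUnion.mpr ⟨p, ⟨hpA p, hpC p⟩⟩
  obtain ⟨F, hF⟩ := isCompact_univ.elim_finite_subcover (fun p => A p ×ˢ C p)
      (fun p => (hA p).prod (hC p)) hcover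
  refine ⟨⋂ p ∈ F, B p, isOpen_biInter_finset (fun p _ => hB p),
      mem_iInter₂.mpr fun p _ => hsB p, ?_⟩
  intro s' hs' x y
  have hx : (x, y) ∈ ⋃ p ∈ F, A p ×ˢ C p := hF (mem_univ _)
  simp only [mem_iUnion] at hx
  obtain ⟨p, hpF, hx, hy⟩ := hx
  have h1 := hiff p x hx s' (mem_iInter₂.mp hs' p hpF) y hy
  have h2 := hiff p x hx s (hsB p) y hy
  exact h1.trans h2.symm

/-- In a compact Hausdorff zero-dimensional topological monoid, every clopen
subset is recognizable by a continuous homomorphism onto a finite discrete monoid. -/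
theorem clopen_subset_recognizable {S : Type*} [Monoid S] [TopologicalSpace S]
    [CompactSpace S] [T2Space S] [ContinuousMul S]
    (hzd : TopologicalSpace.IsTopologicalBasis {s : Set S | IsClopen s})
    (L : Set S) (hL : IsClopen L) :
    ∃ (T : Type) (_ : Monoid T) (_ : Fintype T) (φ : S →* T),
      @Continuous S T _ ⊥ φ ∧ Function.Surjective φ ∧ L = φ ⁻¹' (φ '' L) := by
  classical
  set c := synCon L with hc
  -- fibers of the quotient map are open
  have hfiber : ∀ t : c.Quotient, IsOpen (c.mk' ⁻¹' {t}) := by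
    intro t
    rw [isOpen_iff_forall_mem_open]
    intro s hs
    obtain ⟨V, hV, hsV, hVsub⟩ := synCon_class_open hzd L hL s
    refine ⟨V, ?_, hV, hsV⟩
    intro s' hs'
    have : c s' s := hVsub s' hs'
    simp only [mem_preimage, mem_singleton_iff] at hs ⊢
    rw [← hs]
    exact (Con.eq c).mpr this
  -- the quotient is finite
  have hfin : Finite c.Quotient := by
    have hcov : (univ : Set S) ⊆ ⋃ t : c.Quotient, c.mk' ⁻¹' {t} := by
      intro s _; exact mem_iUnion.mpr ⟨c.mk' s, rfl⟩
    obtain ⟨F, hF⟩ := isCompact_univ.elim_finite_subcover _ hfiber hcov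
    refine Set.finite_univ_iff.mp (F.finite_toSet.subset ?_)
    intro t _
    obtain ⟨s, rfl⟩ := Con.mk'_surjective (c := c) t
    have := hF (mem_univ s)
    simp only [mem_iUnion, mem_preimage, mem_singleton_iff] at this
    obtain ⟨t', ht', h⟩ := this
    rwa [h]
  haveI hsmall : Small.{0} c.Quotient := inferInstance
  haveI : Finite (Shrink.{0} c.Quotient) := Finite.of_equiv _ (equivShrink _)
  haveI : Fintype (Shrink.{0} c.Quotient) := Fintype.ofFinite _
  let ψ : c.Quotient ≃* Shrink.{0} c.Quotient := (Shrink.mulEquiv).symm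
  refine ⟨Shrink.{0} c.Quotient, inferInstance, inferInstance,
    ψ.toMonoidHom.comp c.mk', ?_, ?_, ?_⟩
  · -- continuity into the discrete topology
    letI : TopologicalSpace (Shrink.{0} c.Quotient) := ⊥
    refine continuous_def.mpr fun U _ => ?_
    have : (fun x => ψ (c.mk' x)) ⁻¹' U = ⋃ t ∈ U, c.mk' ⁻¹' {ψ.symm t} := by
      ext x
      simp only [mem_preimage, mem_iUnion, mem_singleton_iff]
      constructor
      · intro h; exact ⟨ψ (c.mk' x), h, by simp⟩
      · rintro ⟨t, ht, h⟩; rw [h]; simpa using ht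
    show IsOpen ((fun x => ψ (c.mk' x)) ⁻¹' U)
    rw [this]
    exact isOpen_biUnion fun t _ => hfiber _
  · exact ψ.surjective.comp (Con.mk'_surjective)
  · ext s
    simp only [mem_preimage, mem_image, MonoidHom.coe_comp, Function.comp_apply,
      MulEquiv.coe_toMonoidHom]
    constructor
    · intro h; exact ⟨s, h, rfl⟩
    · rintro ⟨s₀, hs₀, h⟩
      have : c.mk' s₀ = c.mk' s := ψ.injective h
      have hrel : c s₀ s := (Con.eq c).mp this
      have := (hrel 1 1).mp (by simpa using hs₀)
      simpa using this
end

section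
/- A compact Hausdorff topological monoid is profinite (i.e., an inverse limit of finite discrete monoids) if and only if its topology is zero-dimensional. -/
/-!
A monoid homomorphism onto a finite discrete monoid has clopen fibres, so residual finiteness makes
the space totally separated, which for compact Hausdorff spaces means having a clopen basis.
Conversely, given a clopen set `U` containing `x` but not `y`, the syntactic congruence of `U`
(`s ~ t` iff `a * s * b ∈ U ↔ a * t * b ∈ U` for all `a, b`) separates `x` from `y`. Its classes
are open by the tube lemma, since `(a, b)` ranges over the compact space `S × S`, so the quotient
map is locally constant and, `S` being compact, the quotient is finite.
-/

open Filter Topology TopologicalSpace Function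

theorem IsClopen.isLocallyConstant_mem {X : Type*} [TopologicalSpace X] {U : Set X}
    (hU : IsClopen U) : IsLocallyConstant (· ∈ U) := by
  refine (IsLocallyConstant.iff_eventually_eq _).2 fun x => ?_
  by_cases hx : x ∈ U
  · filter_upwards [hU.isOpen.mem_nhds hx] with y hy
    simp [hx, hy]
  · filter_upwards [hU.compl.isOpen.mem_nhds hx] with y hy
    simp_all

theorem IsLocallyConstant.curry {X Y Z : Type*} [TopologicalSpace X] [TopologicalSpace Y]
    [CompactSpace Y] {f : X × Y → Z} (hf : IsLocallyConstant f) :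
    IsLocallyConstant fun x y => f (x, y) := by
  refine (IsLocallyConstant.iff_eventually_eq _).2 fun x₀ => ?_
  have hnear : ∀ᶠ x in 𝓝 x₀, ∀ y ∈ Set.univ, f (x, y) = f (x₀, y) := by
    refine isCompact_univ.eventually_forall_of_forall_eventually fun y _ => ?_
    have hfst : ∀ᶠ z in 𝓝 (x₀, y), f z = f (x₀, y) := hf.eventually_eq _
    have hsnd : ∀ᶠ z : X × Y in 𝓝 (x₀, y), f (x₀, z.2) = f (x₀, y) :=
      (continuous_snd.tendsto (x₀, y)).eventually
        ((hf.comp_continuous (Continuous.prodMk_right x₀)).eventually_eq y :)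
    filter_upwards [hfst, hsnd] with z hz₁ hz₂
    rw [hz₁, hz₂]
  filter_upwards [hnear] with x hx
  exact funext fun y => hx y trivial

theorem isTopologicalBasis_isClopen_iff_totallySeparatedSpace {X : Type*} [TopologicalSpace X]
    [CompactSpace X] [T2Space X] :
    IsTopologicalBasis {s : Set X | IsClopen s} ↔ TotallySeparatedSpace X :=
  ⟨totallySeparatedSpace_of_t0_of_basis_clopen, fun _ => loc_compact_Haus_tot_disc_of_zero_dim⟩

section SyntacticCon

variable {M : Type*} [Monoid M]

def syntacticCon (U : Set M) : Con M where
  r s t := ∀ a b, a * s * b ∈ U ↔ a * t * b ∈ U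
  iseqv := ⟨fun _ _ _ => Iff.rfl, fun h a b => (h a b).symm,
    fun h₁ h₂ a b => (h₁ a b).trans (h₂ a b)⟩
  mul' {s t s' t'} h h' a b := by
    have h₁ := h' (a * s) b
    have h₂ := h a (t' * b)
    simp only [mul_assoc] at h₁ h₂ ⊢
    exact h₁.trans h₂

theorem syntacticCon.mem_iff {U : Set M} {s t : M} (h : syntacticCon U s t) : s ∈ U ↔ t ∈ U := by
  simpa using h 1 1

variable [TopologicalSpace M] [CompactSpace M] [ContinuousMul M]

theorem isLocallyConstant_syntacticCon_mk' {U : Set M} (hU : IsClopen U) :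
    IsLocallyConstant (syntacticCon U).mk' := by
  have hcontexts : IsLocallyConstant fun t (ab : M × M) => ab.1 * t * ab.2 ∈ U :=
    IsLocallyConstant.curry (f := fun p : M × (M × M) => p.2.1 * p.1 * p.2.2 ∈ U)
      (hU.isLocallyConstant_mem.comp_continuous (by fun_prop))
  refine (IsLocallyConstant.iff_eventually_eq _).2 fun s => ?_
  filter_upwards [hcontexts.eventually_eq s] with t ht
  exact (syntacticCon U).eq.2 fun a b => Iff.of_eq (congrFun ht (a, b))

theorem finite_syntacticCon_quotient {U : Set M} (hU : IsClopen U) :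
    Finite (syntacticCon U).Quotient := by
  have hrange := (isLocallyConstant_syntacticCon_mk' hU).range_finite
  rw [(Con.mk'_surjective).range_eq] at hrange
  exact Set.finite_univ_iff.1 hrange

end SyntacticCon

def TopologicallyResiduallyFinite (S : Type*) [Monoid S] [TopologicalSpace S] : Prop :=
  ∀ x y : S, x ≠ y → ∃ (T : Type) (_ : Monoid T) (_ : Fintype T) (φ : S →* T),
    @Continuous S T _ ⊥ φ ∧ Function.Surjective φ ∧ φ x ≠ φ y

section TopologicallyResiduallyFinite

variable {S : Type*} [Monoid S] [TopologicalSpace S]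

theorem TopologicallyResiduallyFinite.totallySeparatedSpace
    (h : TopologicallyResiduallyFinite S) : TotallySeparatedSpace S := by
  refine totallySeparatedSpace_iff_exists_isClopen.2 fun x y hxy => ?_
  obtain ⟨T, _, _, φ, hφ, -, hne⟩ := h x y hxy
  let _ : TopologicalSpace T := ⊥
  have : DiscreteTopology T := ⟨rfl⟩
  exact ⟨φ ⁻¹' {φ x}, (isClopen_discrete _).preimage hφ, rfl, fun hy => hne hy.symm⟩

theorem exists_finite_quotient_of_isLocallyConstant {M : Type*} [Monoid M] [Finite M]
    (φ : S →* M) (hφ : IsLocallyConstant φ) (hsurj : Surjective φ) {x y : S}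
    (hxy : φ x ≠ φ y) :
    ∃ (T : Type) (_ : Monoid T) (_ : Fintype T) (ψ : S →* T),
      @Continuous S T _ ⊥ ψ ∧ Surjective ψ ∧ ψ x ≠ ψ y := by
  let e : M ≃* Shrink.{0} M := Shrink.mulEquiv.symm
  let _ : TopologicalSpace (Shrink.{0} M) := ⊥
  have : DiscreteTopology (Shrink.{0} M) := ⟨rfl⟩
  exact ⟨Shrink.{0} M, inferInstance, Fintype.ofFinite _, e.toMonoidHom.comp φ,
    (hφ.comp e).continuous, e.surjective.comp hsurj, e.injective.ne hxy⟩

theorem topologicallyResiduallyFinite_of_totallySeparatedSpace [CompactSpace S]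
    [ContinuousMul S] [TotallySeparatedSpace S] : TopologicallyResiduallyFinite S := by
  intro x y hxy
  obtain ⟨U, hU, hxU, hyU⟩ := exists_isClopen_of_totally_separated hxy
  have := finite_syntacticCon_quotient hU
  refine exists_finite_quotient_of_isLocallyConstant (syntacticCon U).mk'
    (isLocallyConstant_syntacticCon_mk' hU) Con.mk'_surjective fun hxy => hyU ?_
  exact (syntacticCon.mem_iff ((syntacticCon U).eq.1 hxy)).1 hxU

end TopologicallyResiduallyFinite

/-- A compact Hausdorff topological monoid is profinite (residually finite as a
topological monoid, equivalently an inverse limit of finite discrete monoids)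
iff its topology is zero-dimensional. -/
theorem profinite_monoid_iff_zeroDimensional {S : Type*} [Monoid S] [TopologicalSpace S]
    [CompactSpace S] [T2Space S] [ContinuousMul S] :
    (∀ x y : S, x ≠ y → ∃ (T : Type) (_ : Monoid T) (_ : Fintype T) (φ : S →* T),
        @Continuous S T _ ⊥ φ ∧ Function.Surjective φ ∧ φ x ≠ φ y) ↔
      TopologicalSpace.IsTopologicalBasis {s : Set S | IsClopen s} := by
  rw [isTopologicalBasis_isClopen_iff_totallySeparatedSpace]
  exact ⟨TopologicallyResiduallyFinite.totallySeparatedSpace,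
    fun _ => topologicallyResiduallyFinite_of_totallySeparatedSpace⟩
end

section
/- Let S be a profinite monoid, V a pseudovariety of finite monoids (nonempty class closed under homomorphic images, submonoids, and finite products), and suppose S is residually in V (distinct points are separated by continuous homomorphisms onto members of V). Then every finite monoid that is a continuous homomorphic image of S belongs to V. -/
/-!
Since `T` is discrete, the set `K` of pairs `(x, y)` with `φ x ≠ φ y` is clopen in `S × S`,
hence compact. Each pair in `K` is separated by a continuous
homomorphism onto a member of `V`, and then so is a whole neighbourhood of it; by compactness
finitely many such homomorphisms suffice, and their product `Ψ` separates all of `K`. Thus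
`ker Ψ ≤ ker φ`, so `T` is a homomorphic image of the submonoid `Ψ(S)` of a member of `V`.
-/

open Topology

lemma isClopen_setOf_apply_ne {X Y : Type*} [TopologicalSpace X] [TopologicalSpace Y]
    [DiscreteTopology Y] {f : X → Y} (hf : Continuous f) :
    IsClopen {q : X × X | f q.1 ≠ f q.2} :=
  (isClopen_discrete {r : Y × Y | r.1 ≠ r.2}).preimage (hf.prodMap hf)

section PairsSeparated

variable {V : ∀ M : Type, Monoid M → Prop} {S : Type} [Monoid S]

variable (V) in
def PairsSeparated (K : Set (S × S)) : Prop :=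
  ∃ (M : Type) (iM : Monoid M) (ψ : S →* M), V M iM ∧ ∀ q ∈ K, ψ q.1 ≠ ψ q.2

lemma PairsSeparated.mono {K L : Set (S × S)} (hKL : K ⊆ L) (hL : PairsSeparated V L) :
    PairsSeparated V K :=
  let ⟨M, iM, ψ, hM, hsep⟩ := hL
  ⟨M, iM, ψ, hM, fun q hq => hsep q (hKL hq)⟩

lemma pairsSeparated_empty (hVne : ∃ (M : Type) (iM : Monoid M), V M iM) :
    PairsSeparated V (∅ : Set (S × S)) :=
  let ⟨M, iM, hM⟩ := hVne
  ⟨M, iM, 1, hM, fun _ hq => hq.elim⟩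

lemma PairsSeparated.union
    (hVprod : ∀ (M N : Type) (iM : Monoid M) (iN : Monoid N),
      V M iM → V N iN → V (M × N) inferInstance)
    {K L : Set (S × S)} (hK : PairsSeparated V K) (hL : PairsSeparated V L) :
    PairsSeparated V (K ∪ L) := by
  obtain ⟨M, iM, ψ, hM, hsepK⟩ := hK
  obtain ⟨N, iN, χ, hN, hsepL⟩ := hL
  refine ⟨M × N, inferInstance, ψ.prod χ, hVprod M N iM iN hM hN, ?_⟩
  rintro q (hq | hq) h
  · exact hsepK q hq (congrArg Prod.fst h)
  · exact hsepL q hq (congrArg Prod.snd h)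

variable [TopologicalSpace S]

lemma exists_mem_nhds_pairsSeparated {M : Type} [iM : Monoid M] (hM : V M iM) (ψ : S →* M)
    (hψ : @Continuous S M _ ⊥ ψ) {x y : S} (hxy : ψ x ≠ ψ y) :
    ∃ t ∈ 𝓝 (x, y), PairsSeparated V t := by
  let _ : TopologicalSpace M := ⊥
  have : DiscreteTopology M := ⟨rfl⟩
  exact ⟨_, (isClopen_setOf_apply_ne hψ).isOpen.mem_nhds hxy, M, iM, ψ, hM, fun _ hq => hq⟩

lemma IsCompact.pairsSeparated
    (hVne : ∃ (M : Type) (iM : Monoid M), V M iM)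
    (hVprod : ∀ (M N : Type) (iM : Monoid M) (iN : Monoid N),
      V M iM → V N iN → V (M × N) inferInstance)
    {K : Set (S × S)} (hK : IsCompact K) (hloc : ∀ p ∈ K, ∃ t ∈ 𝓝 p, PairsSeparated V t) :
    PairsSeparated V K :=
  hK.induction_on (pairsSeparated_empty hVne) (fun _ _ hKL hL => hL.mono hKL)
    (fun _ _ hK hL => hK.union hVprod hL) fun p hp =>
      let ⟨t, ht, hsep⟩ := hloc p hp
      ⟨t, mem_nhdsWithin_of_mem_nhds ht, hsep⟩

end PairsSeparated

lemma mem_of_pairsSeparated_setOf_apply_ne {V : ∀ M : Type, Monoid M → Prop}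
    (hVimg : ∀ (M N : Type) (iM : Monoid M) (iN : Monoid N)
      (f : @MonoidHom M N iM.toMulOneClass.toMulOne iN.toMulOneClass.toMulOne),
      Function.Surjective f → V M iM → V N iN)
    (hVsub : ∀ (M : Type) (iM : Monoid M) (N : @Submonoid M iM.toMulOneClass),
      V M iM → V N inferInstance)
    {S T : Type} [Monoid S] [iT : Monoid T] {φ : S →* T} (hφ : Function.Surjective φ)
    (hsep : PairsSeparated V {q : S × S | φ q.1 ≠ φ q.2}) :
    V T iT := by
  obtain ⟨Q, iQ, Ψ, hQ, hΨ⟩ := hsep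
  have hker : Con.ker Ψ ≤ Con.ker φ := fun {a b} hab => by
    by_contra hne
    exact hΨ (a, b) hne hab
  let f : MonoidHom.mrange Ψ →* T :=
    (Con.lift _ φ hker).comp (Con.quotientKerEquivRange Ψ).symm.toMonoidHom
  have hf : Function.Surjective f := by
    refine (Con.lift_surjective_of_surjective hker hφ).comp ?_
    exact (Con.quotientKerEquivRange Ψ).symm.surjective
  exact hVimg _ T _ iT f hf (hVsub Q iQ _ hQ)

theorem finite_continuous_image_mem_pseudovariety_general
    (V : ∀ (M : Type), Monoid M → Prop)
    -- V is nonempty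
    (hVne : ∃ (M : Type) (iM : Monoid M), V M iM)
    -- V is closed under homomorphic images
    (hVimg : ∀ (M N : Type) (iM : Monoid M) (iN : Monoid N)
      (f : @MonoidHom M N iM.toMulOneClass.toMulOne iN.toMulOneClass.toMulOne),
      Function.Surjective f → V M iM → V N iN)
    -- V is closed under submonoids
    (hVsub : ∀ (M : Type) (iM : Monoid M) (N : @Submonoid M iM.toMulOneClass),
      V M iM → V N inferInstance)
    -- V is closed under finite (binary) direct products
    (hVprod : ∀ (M N : Type) (iM : Monoid M) (iN : Monoid N),
      V M iM → V N iN → V (M × N) inferInstance)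
    -- S is a profinite monoid
    (S : Type) [Monoid S] [TopologicalSpace S] [CompactSpace S]
    -- S is residually in V
    (hres : ∀ x y : S, x ≠ y → ∃ (T : Type) (iT : Monoid T)
      (φ : @MonoidHom S T _ iT.toMulOneClass.toMulOne), V T iT ∧
        @Continuous S T _ ⊥ φ ∧ φ x ≠ φ y)
    -- conclusion: finite continuous homomorphic images of S are in V
    (T : Type) (iT : Monoid T)
    (φ : @MonoidHom S T _ iT.toMulOneClass.toMulOne)
    (hφc : @Continuous S T _ ⊥ φ) (hφs : Function.Surjective φ) :
    V T iT := by
  let _ : TopologicalSpace T := ⊥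
  have : DiscreteTopology T := ⟨rfl⟩
  have hK : IsCompact {q : S × S | φ q.1 ≠ φ q.2} :=
    (isClopen_setOf_apply_ne hφc).isClosed.isCompact
  refine mem_of_pairsSeparated_setOf_apply_ne hVimg hVsub hφs (hK.pairsSeparated hVne hVprod ?_)
  intro p hp
  obtain ⟨M, iM, ψ, hM, hψc, hψp⟩ := hres p.1 p.2 fun h => hp (congrArg φ h)
  exact exists_mem_nhds_pairsSeparated hM ψ hψc hψp

/-- If `S` is a profinite monoid residually in a pseudovariety `V` of finite
monoids, then every finite continuous homomorphic image of `S` belongs to `V`. -/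
theorem finite_continuous_image_mem_pseudovariety
    (V : ∀ (M : Type), Monoid M → Prop)
    -- V consists of finite monoids
    (hVfin : ∀ (M : Type) (iM : Monoid M), V M iM → Finite M)
    -- V is nonempty
    (hVne : ∃ (M : Type) (iM : Monoid M), V M iM)
    -- V is closed under homomorphic images
    (hVimg : ∀ (M N : Type) (iM : Monoid M) (iN : Monoid N)
      (f : @MonoidHom M N iM.toMulOneClass.toMulOne iN.toMulOneClass.toMulOne),
      Function.Surjective f → V M iM → V N iN)
    -- V is closed under submonoids
    (hVsub : ∀ (M : Type) (iM : Monoid M) (N : @Submonoid M iM.toMulOneClass),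
      V M iM → V N inferInstance)
    -- V is closed under finite (binary) direct products
    (hVprod : ∀ (M N : Type) (iM : Monoid M) (iN : Monoid N),
      V M iM → V N iN → V (M × N) inferInstance)
    -- S is a profinite monoid
    (S : Type) [Monoid S] [TopologicalSpace S] [CompactSpace S] [T2Space S]
    [TotallyDisconnectedSpace S] [ContinuousMul S]
    -- S is residually in V
    (hres : ∀ x y : S, x ≠ y → ∃ (T : Type) (iT : Monoid T)
      (φ : @MonoidHom S T _ iT.toMulOneClass.toMulOne), V T iT ∧
        @Continuous S T _ ⊥ φ ∧ φ x ≠ φ y)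
    -- conclusion: finite continuous homomorphic images of S are in V
    (T : Type) (iT : Monoid T) (_ : Finite T)
    (φ : @MonoidHom S T _ iT.toMulOneClass.toMulOne)
    (hφc : @Continuous S T _ ⊥ φ) (hφs : Function.Surjective φ) :
    V T iT :=
  finite_continuous_image_mem_pseudovariety_general V hVne hVimg hVsub hVprod S hres T iT φ hφc hφs
end

section
/- Let M be a compact Hausdorff topological monoid and s ∈ M. Then the closure of {s^n : n ≥ 1} is a commutative compact subsemigroup of M, and its minimal ideal is a group. -/
/-- In a compact Hausdorff topological monoid `M`, the closure `T` of
`{s^n : n ≥ 1}` is a commutative compact subsemigroup, and its minimal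
(closed two-sided) ideal is a group. -/
theorem closure_powers_commutative_and_minimal_ideal_group {M : Type*} [Monoid M]
    [TopologicalSpace M] [CompactSpace M] [T2Space M] [ContinuousMul M] (s : M) :
    IsCompact (closure {x : M | ∃ n : ℕ, 1 ≤ n ∧ x = s ^ n}) ∧
    (∀ x ∈ closure {x : M | ∃ n : ℕ, 1 ≤ n ∧ x = s ^ n},
      ∀ y ∈ closure {x : M | ∃ n : ℕ, 1 ≤ n ∧ x = s ^ n},
        x * y ∈ closure {x : M | ∃ n : ℕ, 1 ≤ n ∧ x = s ^ n} ∧ x * y = y * x) ∧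
    ∃ I : Set M,
      -- I is a nonempty closed two-sided ideal of T := closure {s^n : n ≥ 1}
      I.Nonempty ∧ IsClosed I ∧ I ⊆ closure {x : M | ∃ n : ℕ, 1 ≤ n ∧ x = s ^ n} ∧
      (∀ x ∈ I, ∀ t ∈ closure {x : M | ∃ n : ℕ, 1 ≤ n ∧ x = s ^ n},
        x * t ∈ I ∧ t * x ∈ I) ∧
      -- I is the minimal such ideal
      (∀ J : Set M, J.Nonempty → IsClosed J →
        J ⊆ closure {x : M | ∃ n : ℕ, 1 ≤ n ∧ x = s ^ n} →
        (∀ x ∈ J, ∀ t ∈ closure {x : M | ∃ n : ℕ, 1 ≤ n ∧ x = s ^ n},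
          x * t ∈ J ∧ t * x ∈ J) → I ⊆ J) ∧
      -- I is a group
      (∃ e ∈ I, (∀ x ∈ I, e * x = x ∧ x * e = x) ∧
        ∀ x ∈ I, ∃ y ∈ I, x * y = e ∧ y * x = e) := by
  set S : Set M := {x : M | ∃ n : ℕ, 1 ≤ n ∧ x = s ^ n} with hS
  set T : Set M := closure S with hT
  have hsS : s ∈ S := ⟨1, le_refl 1, (pow_one s).symm⟩
  have hST : S ⊆ T := subset_closure
  have hsT : s ∈ T := hST hsS
  have hTcl : IsClosed T := isClosed_closure
  have hTcomp : IsCompact T := hTcl.isCompact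
  -- S is closed under multiplication
  have hSmul : ∀ x ∈ S, ∀ y ∈ S, x * y ∈ S := by
    rintro x ⟨m, hm, rfl⟩ y ⟨n, hn, rfl⟩
    exact ⟨m + n, le_trans hm (Nat.le_add_right _ _), (pow_add s m n).symm⟩
  -- T is closed under multiplication
  have hmul : ∀ x ∈ T, ∀ y ∈ T, x * y ∈ T := by
    intro x hx y hy
    have h1 : ∀ z ∈ S, z * y ∈ T := by
      intro z hz
      have hmt : Set.MapsTo (z * ·) S T := fun w hw => hST (hSmul z hz w hw)
      exact hmt.closure_left (continuous_mul_left z) hTcl hy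
    have hmt : Set.MapsTo (· * y) S T := h1
    exact hmt.closure_left (continuous_mul_right y) hTcl hx
  -- T is commutative
  have hcomm : ∀ x ∈ T, ∀ y ∈ T, x * y = y * x := by
    intro x hx y hy
    have h1 : ∀ z ∈ S, z * y = y * z := by
      intro z hz
      have hcl : IsClosed {w : M | z * w = w * z} :=
        isClosed_eq (continuous_mul_left z) (continuous_mul_right z)
      refine hcl.closure_subset_iff.mpr ?_ hy
      rintro w ⟨n, hn, rfl⟩
      obtain ⟨m, hm, rfl⟩ := hz
      simp only [Set.mem_setOf_eq, ← pow_add, add_comm]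
    have hcl : IsClosed {w : M | w * y = y * w} :=
      isClosed_eq (continuous_mul_right y) (continuous_mul_left y)
    exact hcl.closure_subset_iff.mpr (fun z hz => h1 z hz) hx
  -- family of principal ideals
  set F : M → Set M := fun t => (t * ·) '' T with hF
  have hFcomp : ∀ t, IsCompact (F t) := fun t => hTcomp.image (continuous_mul_left t)
  have hFcl : ∀ t, IsClosed (F t) := fun t => (hFcomp t).isClosed
  have hFne : ∀ t, (F t).Nonempty := fun t => ⟨t * s, s, hsT, rfl⟩
  have hFsub : ∀ t ∈ T, F t ⊆ T := by
    rintro t ht _ ⟨u, hu, rfl⟩; exact hmul t ht u hu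
  have hFideal : ∀ t ∈ T, ∀ x ∈ F t, ∀ u ∈ T, x * u ∈ F t := by
    rintro t ht _ ⟨v, hv, rfl⟩ u hu
    exact ⟨v * u, hmul v hv u hu, (mul_assoc t v u).symm⟩
  -- the minimal ideal
  haveI : Nonempty T := ⟨⟨s, hsT⟩⟩
  set I : Set M := ⋂ t : T, F t with hI
  have hdir : Directed (· ⊇ ·) (fun t : T => F t) := by
    rintro ⟨t1, ht1⟩ ⟨t2, ht2⟩
    refine ⟨⟨t1 * t2, hmul t1 ht1 t2 ht2⟩, ?_, ?_⟩
    · rintro _ ⟨u, hu, rfl⟩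
      exact ⟨t2 * u, hmul t2 ht2 u hu, (mul_assoc t1 t2 u).symm⟩
    · rintro _ ⟨u, hu, rfl⟩
      refine ⟨t1 * u, hmul t1 ht1 u hu, ?_⟩
      show t2 * (t1 * u) = t1 * t2 * u
      rw [← mul_assoc, hcomm t2 ht2 t1 ht1]
  have hIne : I.Nonempty :=
    IsCompact.nonempty_iInter_of_directed_nonempty_isCompact_isClosed _ hdir
      (fun t => hFne t) (fun t => hFcomp t) (fun t => hFcl t)
  have hIcl : IsClosed I := isClosed_iInter fun t => hFcl t
  have hIT : I ⊆ T := fun x hx => hFsub s hsT (Set.mem_iInter.mp hx ⟨s, hsT⟩)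
  have hIideal : ∀ x ∈ I, ∀ t ∈ T, x * t ∈ I ∧ t * x ∈ I := by
    intro x hx t ht
    have h1 : x * t ∈ I := by
      refine Set.mem_iInter.mpr fun u => ?_
      exact hFideal u u.2 x (Set.mem_iInter.mp hx u) t ht
    exact ⟨h1, by rwa [hcomm t ht x (hIT hx)]⟩
  have hmin : ∀ J : Set M, J.Nonempty → IsClosed J → J ⊆ T →
      (∀ x ∈ J, ∀ t ∈ T, x * t ∈ J ∧ t * x ∈ J) → I ⊆ J := by
    rintro J ⟨t0, ht0⟩ _ hJT hJideal x hx
    have hx0 : x ∈ F t0 := Set.mem_iInter.mp hx ⟨t0, hJT ht0⟩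
    obtain ⟨u, hu, rfl⟩ := hx0
    exact (hJideal t0 ht0 u hu).1
  -- x * I = I for x ∈ I
  have hxI : ∀ x ∈ I, (x * ·) '' I = I := by
    intro x hx
    have hxT : x ∈ T := hIT hx
    apply Set.Subset.antisymm
    · rintro _ ⟨v, hv, rfl⟩
      exact (hIideal x hx v (hIT hv)).1
    · apply hmin
      · exact ⟨x * x, x, hx, rfl⟩
      · exact ((hIcl.isCompact).image (continuous_mul_left x)).isClosed
      · rintro _ ⟨v, hv, rfl⟩; exact hIT (hIideal x hx v (hIT hv)).1
      · rintro _ ⟨v, hv, rfl⟩ t ht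
        constructor
        · exact ⟨v * t, (hIideal v hv t ht).1, (mul_assoc x v t).symm⟩
        · refine ⟨v * t, (hIideal v hv t ht).1, ?_⟩
          show x * (v * t) = t * (x * v)
          rw [← mul_assoc]
          exact (hcomm t ht (x * v) (hIT (hIideal x hx v (hIT hv)).1)).symm
    -- done
  obtain ⟨x, hx⟩ := hIne
  obtain ⟨e, heI, hxe⟩ : ∃ e ∈ I, x * e = x := by
    have := hxI x hx
    have hx' : x ∈ (x * ·) '' I := this.symm ▸ hx
    obtain ⟨e, heI, he⟩ := hx'
    exact ⟨e, heI, he⟩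
  have hident : ∀ y ∈ I, e * y = y ∧ y * e = y := by
    intro y hy
    have hy' : y ∈ (x * ·) '' I := (hxI x hx).symm ▸ hy
    obtain ⟨z, hz, rfl⟩ := hy'
    have h1 : e * (x * z) = x * z := by
      rw [← mul_assoc, hcomm e (hIT heI) x (hIT hx), hxe]
    exact ⟨h1, by rw [hcomm (x * z) (hIT hy) e (hIT heI)]; exact h1⟩
  refine ⟨hTcomp, fun a ha b hb => ⟨hmul a ha b hb, hcomm a ha b hb⟩,
    I, ⟨x, hx⟩, hIcl, hIT, hIideal, hmin, e, heI, hident, ?_⟩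
  intro y hy
  have he' : e ∈ (y * ·) '' I := (hxI y hy).symm ▸ heI
  obtain ⟨w, hw, hyw⟩ := he'
  exact ⟨w, hw, hyw, by rw [hcomm w (hIT hw) y (hIT hy)]; exact hyw⟩
end

section
/- Let S be a finitely generated profinite group (topologically generated by a finite set). Then every surjective continuous endomorphism of S is an automorphism (S is Hopfian). -/
/-!
For each `n`, a topologically finitely generated group has only finitely many open normal
subgroups of index `n`: such a subgroup is the kernel of a homomorphism to `Perm (Fin n)`, and
that homomorphism is determined by the images of the finitely many generators. A surjective
endomorphism `φ` acts injectively, hence bijectively, on this finite set by `N ↦ φ⁻¹(N)`, so every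
open normal subgroup is of the form `φ⁻¹(M)` and contains `ker φ`. In a profinite group the open
normal subgroups intersect trivially, so `φ` is injective; a continuous bijection from a compact
space to a Hausdorff one is a homeomorphism.
-/

theorem Subgroup.exists_ker_eq_of_normal {G : Type*} [Group G] (N : Subgroup G) [N.Normal]
    [N.FiniteIndex] : ∃ ρ : G →* Equiv.Perm (Fin N.index), ρ.ker = N := by
  let e : G ⧸ N ≃ Fin N.index := Finite.equivFin _
  refine ⟨e.permCongrHom.toMonoidHom.comp (MulAction.toPermHom G (G ⧸ N)), ?_⟩
  rw [MonoidHom.ker_comp_of_injective _ _ (MulEquiv.injective _), ← Subgroup.normalCore_eq_ker,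
    Subgroup.normalCore_eq_self]

section FinitelyGenerated

variable {G : Type*} [Group G] [TopologicalSpace G] [SeparatelyContinuousMul G]

theorem Subgroup.eq_top_of_isOpen_of_dense_le {H K : Subgroup G} (hH : IsOpen (H : Set G))
    (hK : Dense (K : Set G)) (hKH : K ≤ H) : H = ⊤ := by
  rw [← Subgroup.coe_eq_univ, ← (H.isClosed_of_isOpen hH).closure_eq]
  exact (hK.mono hKH).closure_eq

theorem MonoidHom.eq_of_eqOn_of_dense_closure {M : Type*} [Group M] {F : Set G}
    (hd : Dense (Subgroup.closure F : Set G)) {ρ₁ ρ₂ : G →* M} (h₁ : IsOpen (ρ₁.ker : Set G))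
    (h₂ : IsOpen (ρ₂.ker : Set G)) (hF : Set.EqOn ρ₁ ρ₂ F) : ρ₁ = ρ₂ := by
  have hker : ρ₁.ker ⊓ ρ₂.ker ≤ ρ₁.eqLocus ρ₂ := fun x ⟨hx₁, hx₂⟩ =>
    (MonoidHom.mem_ker.1 hx₁).trans (MonoidHom.mem_ker.1 hx₂).symm
  have hopen := Subgroup.isOpen_mono hker (h₁.inter h₂)
  have htop := Subgroup.eq_top_of_isOpen_of_dense_le hopen hd ((Subgroup.closure_le _).2 hF)
  exact MonoidHom.ext fun x => (htop ▸ Subgroup.mem_top x : x ∈ ρ₁.eqLocus ρ₂)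

theorem finite_setOf_isOpen_ker {M : Type*} [Group M] [Finite M] {F : Set G} (hF : F.Finite)
    (hd : Dense (Subgroup.closure F : Set G)) : {ρ : G →* M | IsOpen (ρ.ker : Set G)}.Finite := by
  have : Finite F := hF
  refine Set.Finite.of_finite_image (f := fun (ρ : G →* M) (x : F) => ρ x) (Set.toFinite _) ?_
  intro ρ₁ h₁ ρ₂ h₂ h
  exact MonoidHom.eq_of_eqOn_of_dense_closure hd h₁ h₂ fun x hx => congrFun h ⟨x, hx⟩

theorem finite_setOf_normal_isOpen_index_eq {F : Set G} (hF : F.Finite)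
    (hd : Dense (Subgroup.closure F : Set G)) {n : ℕ} (hn : n ≠ 0) :
    {N : Subgroup G | N.Normal ∧ IsOpen (N : Set G) ∧ N.index = n}.Finite := by
  refine ((finite_setOf_isOpen_ker (M := Equiv.Perm (Fin n)) hF hd).image MonoidHom.ker).subset ?_
  rintro N ⟨hN, hNo, rfl⟩
  have : N.FiniteIndex := ⟨hn⟩
  obtain ⟨ρ, hρ⟩ := N.exists_ker_eq_of_normal
  exact ⟨ρ, show IsOpen (ρ.ker : Set G) by rwa [hρ], hρ⟩

theorem MonoidHom.ker_le_of_surjective_of_isOpen {F : Set G} (hF : F.Finite)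
    (hd : Dense (Subgroup.closure F : Set G)) {φ : G →* G} (hφc : Continuous φ)
    (hφs : Function.Surjective φ) (N : Subgroup G) [N.Normal] [N.FiniteIndex]
    (hN : IsOpen (N : Set G)) : φ.ker ≤ N := by
  set S := {M : Subgroup G | M.Normal ∧ IsOpen (M : Set G) ∧ M.index = N.index}
  have hS : S.Finite := finite_setOf_normal_isOpen_index_eq hF hd Subgroup.FiniteIndex.index_ne_zero
  have hmaps : Set.MapsTo (Subgroup.comap φ) S S := fun M ⟨hMn, hMo, hMi⟩ =>
    ⟨hMn.comap φ, hMo.preimage hφc, (M.index_comap_of_surjective hφs).trans hMi⟩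
  have hbij := (hS.injOn_iff_bijOn_of_mapsTo hmaps).1 (Subgroup.comap_injective hφs).injOn
  obtain ⟨M, -, rfl⟩ := hbij.surjOn ⟨‹_›, hN, rfl⟩
  exact φ.ker_le_comap M

end FinitelyGenerated

theorem ProfiniteGrp.eq_one_of_forall_mem_openNormalSubgroup {G : Type*} [Group G]
    [TopologicalSpace G] [IsTopologicalGroup G] [CompactSpace G] [TotallyDisconnectedSpace G]
    {x : G} (hx : ∀ H : OpenNormalSubgroup G, x ∈ H) : x = 1 := by
  by_contra hx1
  obtain ⟨H, hH⟩ := exist_openNormalSubgroup_sub_open_nhds_of_one isOpen_compl_singleton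
    (Set.mem_compl_singleton_iff.2 (Ne.symm hx1))
  exact hH (hx H) rfl

theorem MonoidHom.injective_of_surjective_of_dense_closure_finite {G : Type*} [Group G]
    [TopologicalSpace G] [IsTopologicalGroup G] [CompactSpace G] [TotallyDisconnectedSpace G]
    {F : Set G} (hF : F.Finite) (hd : Dense (Subgroup.closure F : Set G)) {φ : G →* G}
    (hφc : Continuous φ) (hφs : Function.Surjective φ) : Function.Injective φ := by
  rw [← MonoidHom.ker_eq_bot_iff, Subgroup.eq_bot_iff_forall]
  refine fun x hx => ProfiniteGrp.eq_one_of_forall_mem_openNormalSubgroup fun H => ?_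
  have : Finite (G ⧸ H.toSubgroup) := H.quotient_finite_of_isOpen H.isOpen'
  have : H.toSubgroup.FiniteIndex := Subgroup.finiteIndex_of_finite_quotient
  exact φ.ker_le_of_surjective_of_isOpen hF hd hφc hφs H.toSubgroup H.isOpen' hx

theorem profinite_group_hopfian_general {G : Type*} [Group G] [TopologicalSpace G]
    [CompactSpace G] [TotallyDisconnectedSpace G] [IsTopologicalGroup G]
    (hfg : ∃ F : Finset G, Dense ((Subgroup.closure (F : Set G) : Subgroup G) : Set G))
    (φ : G →* G) (hφc : Continuous φ) (hφs : Function.Surjective φ) :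
    ∃ e : G ≃* G, (⇑e = ⇑φ) ∧ Continuous e ∧ Continuous e.symm := by
  obtain ⟨F, hd⟩ := hfg
  have hφi := φ.injective_of_surjective_of_dense_closure_finite F.finite_toSet hd hφc hφs
  let e := MulEquiv.ofBijective φ ⟨hφi, hφs⟩
  exact ⟨e, rfl, hφc, (hφc.homeoOfEquivCompactToT2 (f := e.toEquiv)).symm.continuous⟩

/-- A topologically finitely generated profinite group is Hopfian: every
surjective continuous endomorphism is a (topological) automorphism. -/
theorem profinite_group_hopfian {G : Type*} [Group G] [TopologicalSpace G]
    [CompactSpace G] [T2Space G] [TotallyDisconnectedSpace G] [IsTopologicalGroup G]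
    (hfg : ∃ F : Finset G, Dense ((Subgroup.closure (F : Set G) : Subgroup G) : Set G))
    (φ : G →* G) (hφc : Continuous φ) (hφs : Function.Surjective φ) :
    ∃ e : G ≃* G, (⇑e = ⇑φ) ∧ Continuous e ∧ Continuous e.symm :=
  profinite_group_hopfian_general hfg φ hφc hφs
end

section
/- Every finitely generated subgroup of a free group is closed in the profinite topology of the free group (M. Hall's theorem). -/
/-- The profinite topology on a group: the topology having as a basis the
cosets of finite-index normal subgroups, i.e. the infimum of the topologies
induced from the discrete quotients by finite-index normal subgroups. -/
def profiniteTopology (G : Type*) [Group G] : TopologicalSpace G :=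
  ⨅ (N : Subgroup G) (_ : N.Normal) (_ : N.FiniteIndex),
    TopologicalSpace.induced (fun g : G => (QuotientGroup.mk g : G ⧸ N)) ⊥

/-- Any bijection between two subsets of a finite type extends to a permutation. -/
private lemma exists_perm_extend {β : Type*} [Finite β] (s t : Set β) (e : s ≃ t) :
    ∃ σ : Equiv.Perm β, ∀ x : s, σ (x : β) = ((e x : t) : β) := by
  classical
  have h1 : Nat.card s = Nat.card t := Nat.card_congr e
  have hs := Set.ncard_add_ncard_compl s (Set.toFinite s) (Set.toFinite _)
  have ht := Set.ncard_add_ncard_compl t (Set.toFinite t) (Set.toFinite _)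
  have h2 : Nat.card (sᶜ : Set β) = Nat.card (tᶜ : Set β) := by
    rw [Nat.card_coe_set_eq, Nat.card_coe_set_eq] at h1 ⊢
    omega
  obtain ⟨c⟩ := Finite.card_eq.mp h2
  refine ⟨(Equiv.Set.sumCompl s).symm.trans ((e.sumCongr c).trans (Equiv.Set.sumCompl t)), ?_⟩
  intro x
  simp [Equiv.Set.sumCompl_symm_apply_of_mem x.2]

/-- M. Hall's separation lemma: a finitely generated subgroup of a free group
can be separated from any element outside it by a finite-index normal subgroup. -/
private lemma hall_separation {α : Type*} (H : Subgroup (FreeGroup α)) (hH : H.FG)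
    {g : FreeGroup α} (hg : g ∉ H) :
    ∃ N : Subgroup (FreeGroup α), N.Normal ∧ N.FiniteIndex ∧
      ∀ x : FreeGroup α,
        (QuotientGroup.mk x : FreeGroup α ⧸ N) = QuotientGroup.mk g → x ∉ H := by
  classical
  obtain ⟨T, hT⟩ := hH
  -- the finite set of cosets: all suffix-cosets of the generators and of `g`
  let Q := FreeGroup α ⧸ H
  let SC : FreeGroup α → Finset Q := fun w =>
    (Finset.range (w.toWord.length + 1)).image
      (fun i => (QuotientGroup.mk (FreeGroup.mk (w.toWord.drop i)) : Q))
  let D : Finset Q := insert (QuotientGroup.mk 1) (T.sup SC ∪ SC g)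
  have hp0 : (QuotientGroup.mk 1 : Q) ∈ D := Finset.mem_insert_self _ _
  let β := {q : Q // q ∈ D}
  -- for every letter, extend the partial coset-translation to a permutation of `D`
  have hσ : ∀ a : α, ∃ σa : Equiv.Perm β,
      ∀ (p : β) (h : (FreeGroup.of a) • (p : Q) ∈ D),
        σa p = ⟨(FreeGroup.of a) • (p : Q), h⟩ := by
    intro a
    let s : Set β := {p | (FreeGroup.of a) • (p : Q) ∈ D}
    let t : Set β := {p | (FreeGroup.of a)⁻¹ • (p : Q) ∈ D}
    let e : s ≃ t :=
      { toFun := fun p => ⟨⟨(FreeGroup.of a) • ((p : β) : Q), p.2⟩, by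
          show (FreeGroup.of a)⁻¹ • ((FreeGroup.of a) • ((p : β) : Q)) ∈ D
          rw [inv_smul_smul]; exact (p : β).2⟩
        invFun := fun p => ⟨⟨(FreeGroup.of a)⁻¹ • ((p : β) : Q), p.2⟩, by
          show (FreeGroup.of a) • ((FreeGroup.of a)⁻¹ • ((p : β) : Q)) ∈ D
          rw [smul_inv_smul]; exact (p : β).2⟩
        left_inv := fun p => by
          ext
          show (FreeGroup.of a)⁻¹ • ((FreeGroup.of a) • ((p : β) : Q)) = _
          rw [inv_smul_smul]
        right_inv := fun p => by
          ext
          show (FreeGroup.of a) • ((FreeGroup.of a)⁻¹ • ((p : β) : Q)) = _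
          rw [smul_inv_smul] }
    obtain ⟨σa, hσa⟩ := exists_perm_extend s t e
    refine ⟨σa, fun p h => ?_⟩
    exact hσa ⟨p, h⟩
  choose σ hσspec using hσ
  -- inverse version
  have hσinv : ∀ (a : α) (p : β) (h : (FreeGroup.of a)⁻¹ • (p : Q) ∈ D),
      (σ a)⁻¹ p = ⟨(FreeGroup.of a)⁻¹ • (p : Q), h⟩ := by
    intro a p h
    have h2 : (FreeGroup.of a) • (((⟨(FreeGroup.of a)⁻¹ • (p : Q), h⟩ : β)) : Q) ∈ D := by
      show (FreeGroup.of a) • ((FreeGroup.of a)⁻¹ • (p : Q)) ∈ D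
      rw [smul_inv_smul]; exact p.2
    have h3 : σ a ⟨(FreeGroup.of a)⁻¹ • (p : Q), h⟩ = p := by
      rw [hσspec a _ h2]
      ext
      exact smul_inv_smul _ _
    show (σ a).symm p = _
    rw [Equiv.symm_apply_eq]
    exact h3.symm
  -- the key computation: words whose suffix-cosets all lie in `D` act as expected
  have key : ∀ L : List (α × Bool),
      (∀ i ≤ L.length, (QuotientGroup.mk (FreeGroup.mk (L.drop i)) : Q) ∈ D) →
      ∀ hL : (QuotientGroup.mk (FreeGroup.mk L) : Q) ∈ D,
      FreeGroup.lift σ (FreeGroup.mk L) ⟨QuotientGroup.mk 1, hp0⟩ =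
        ⟨QuotientGroup.mk (FreeGroup.mk L), hL⟩ := by
    intro L
    induction L with
    | nil =>
      intro _ hL
      refine Subtype.ext ?_
      show _ = (QuotientGroup.mk (FreeGroup.mk []) : Q)
      rw [← FreeGroup.one_eq_mk, map_one]
      rfl
    | cons x L' ih =>
      obtain ⟨a, b⟩ := x
      intro hmem hL
      have hL' : (QuotientGroup.mk (FreeGroup.mk L') : Q) ∈ D :=
        hmem 1 (Nat.succ_le_succ (Nat.zero_le _))
      have hmem' : ∀ i ≤ L'.length,
          (QuotientGroup.mk (FreeGroup.mk (L'.drop i)) : Q) ∈ D := fun i hi =>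
        hmem (i + 1) (Nat.succ_le_succ hi)
      have hsplit : FreeGroup.mk ((a, b) :: L') =
          FreeGroup.mk [(a, b)] * FreeGroup.mk L' := by
        rw [FreeGroup.mul_mk]
        rfl
      refine Subtype.ext ?_
      show _ = (QuotientGroup.mk (FreeGroup.mk ((a, b) :: L')) : Q)
      rw [hsplit, map_mul, Equiv.Perm.mul_apply, ih hmem' hL']
      cases b with
      | true =>
        have hofa : FreeGroup.mk [(a, true)] = FreeGroup.of a := rfl
        have hD : (FreeGroup.of a) • ((⟨QuotientGroup.mk (FreeGroup.mk L'), hL'⟩ : β) : Q) ∈ D := by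
          show (QuotientGroup.mk ((FreeGroup.of a) * FreeGroup.mk L') : Q) ∈ D
          have h0 := hmem 0 (Nat.zero_le _)
          simpa [← hofa, FreeGroup.mul_mk] using h0
        rw [hofa, FreeGroup.lift_apply_of, hσspec a _ hD]
        show (QuotientGroup.mk ((FreeGroup.of a) * FreeGroup.mk L') : Q) = _
        rw [← hofa, FreeGroup.mul_mk]
      | false =>
        have hofa : FreeGroup.mk [(a, false)] = (FreeGroup.of a)⁻¹ := by
          rw [show (FreeGroup.of a) = FreeGroup.mk [(a, true)] from rfl, FreeGroup.inv_mk]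
          rfl
        have hD : (FreeGroup.of a)⁻¹ • ((⟨QuotientGroup.mk (FreeGroup.mk L'), hL'⟩ : β) : Q) ∈ D := by
          show (QuotientGroup.mk ((FreeGroup.of a)⁻¹ * FreeGroup.mk L') : Q) ∈ D
          have h0 := hmem 0 (Nat.zero_le _)
          simpa [← hofa, FreeGroup.mul_mk] using h0
        rw [hofa, map_inv, FreeGroup.lift_apply_of, hσinv a _ hD]
        show (QuotientGroup.mk ((FreeGroup.of a)⁻¹ * FreeGroup.mk L') : Q) = _
        rw [← hofa, FreeGroup.mul_mk]
  -- suffix-cosets of a word `w` whose suffix set is included in `D` are in `D`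
  have hDmem : ∀ w : FreeGroup α, SC w ⊆ D →
      ∀ i ≤ w.toWord.length,
        (QuotientGroup.mk (FreeGroup.mk (w.toWord.drop i)) : Q) ∈ D := by
    intro w hw i hi
    exact hw (Finset.mem_image.mpr ⟨i, Finset.mem_range.mpr (Nat.lt_succ_of_le hi), rfl⟩)
  -- every element of `H` fixes the base point
  have hstab : ∀ x ∈ H,
      FreeGroup.lift σ x ⟨QuotientGroup.mk 1, hp0⟩ = ⟨QuotientGroup.mk 1, hp0⟩ := by
    have hle' : Subgroup.closure (T : Set (FreeGroup α)) ≤ Subgroup.comap (FreeGroup.lift σ)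
        (MulAction.stabilizer (Equiv.Perm β) (⟨QuotientGroup.mk 1, hp0⟩ : β)) := by
      rw [Subgroup.closure_le]
      intro x hx
      have hxT : x ∈ T := hx
      have hxH : x ∈ H := by rw [← hT]; exact Subgroup.subset_closure hx
      have hsub : SC x ⊆ D := fun q hq =>
        Finset.mem_insert_of_mem (Finset.mem_union_left _ (Finset.mem_of_subset (Finset.le_sup (f := SC) hxT) hq))
      have hmem := hDmem x hsub
      have h0 : (QuotientGroup.mk (FreeGroup.mk x.toWord) : Q) ∈ D := by
        have := hmem 0 (Nat.zero_le _)
        simpa using this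
      have hk : FreeGroup.lift σ x ⟨QuotientGroup.mk 1, hp0⟩ =
          ⟨QuotientGroup.mk (FreeGroup.mk x.toWord), h0⟩ := by
        conv_lhs => rw [← FreeGroup.mk_toWord (x := x)]
        exact key x.toWord hmem h0
      simp only [Subgroup.mem_comap, MulAction.mem_stabilizer_iff, SetLike.mem_coe]
      show FreeGroup.lift σ x • (⟨QuotientGroup.mk 1, hp0⟩ : β) = _
      rw [Equiv.Perm.smul_def, hk]
      refine Subtype.ext ?_
      show (QuotientGroup.mk (FreeGroup.mk x.toWord) : Q) = QuotientGroup.mk 1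
      rw [QuotientGroup.eq, FreeGroup.mk_toWord]
      simpa using H.inv_mem hxH
    have hle : H ≤ Subgroup.comap (FreeGroup.lift σ)
        (MulAction.stabilizer (Equiv.Perm β) (⟨QuotientGroup.mk 1, hp0⟩ : β)) := hT ▸ hle'
    intro x hx
    have := hle hx
    simp only [Subgroup.mem_comap, MulAction.mem_stabilizer_iff] at this
    rw [Equiv.Perm.smul_def] at this
    exact this
  -- `g` moves the base point
  have hsubg : SC g ⊆ D := fun q hq =>
    Finset.mem_insert_of_mem (Finset.mem_union_right _ hq)
  have hmemg := hDmem g hsubg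
  have h0g : (QuotientGroup.mk (FreeGroup.mk g.toWord) : Q) ∈ D := by
    have := hmemg 0 (Nat.zero_le _)
    simpa using this
  have hgval : FreeGroup.lift σ g ⟨QuotientGroup.mk 1, hp0⟩ =
      ⟨QuotientGroup.mk (FreeGroup.mk g.toWord), h0g⟩ := by
    conv_lhs => rw [← FreeGroup.mk_toWord (x := g)]
    exact key g.toWord hmemg h0g
  have hgne : (QuotientGroup.mk (FreeGroup.mk g.toWord) : Q) ≠ QuotientGroup.mk 1 := by
    rw [Ne, QuotientGroup.eq, FreeGroup.mk_toWord]
    intro hmemH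
    exact hg (by simpa using H.inv_mem hmemH)
  -- the kernel of the permutation representation works
  have : Finite ((FreeGroup.lift σ).range : Subgroup (Equiv.Perm β)) := by
    infer_instance
  refine ⟨(FreeGroup.lift σ).ker, MonoidHom.normal_ker _, Subgroup.finiteIndex_ker _, ?_⟩
  intro x hx hxH
  have hker : x⁻¹ * g ∈ (FreeGroup.lift σ).ker := QuotientGroup.eq.mp hx
  have hx' : FreeGroup.lift σ (x⁻¹ * g) = 1 := hker
  have heq : FreeGroup.lift σ g = FreeGroup.lift σ x := by
    have hmm : FreeGroup.lift σ x * FreeGroup.lift σ (x⁻¹ * g) = FreeGroup.lift σ g := by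
      rw [← map_mul]
      congr 1
      group
    rw [hx', mul_one] at hmm
    exact hmm.symm
  have h1 := hstab x hxH
  rw [← heq, hgval] at h1
  exact hgne (congrArg Subtype.val h1)

/-- M. Hall's theorem: every finitely generated subgroup of a free group is
closed in the profinite topology. -/
theorem fg_subgroup_closed_in_profinite_topology {α : Type*}
    (H : Subgroup (FreeGroup α)) (hH : H.FG) :
    @IsClosed (FreeGroup α) (profiniteTopology (FreeGroup α)) (H : Set (FreeGroup α)) := by
  letI : TopologicalSpace (FreeGroup α) := profiniteTopology (FreeGroup α)
  rw [← isOpen_compl_iff, isOpen_iff_forall_mem_open]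
  intro g hg
  obtain ⟨N, hN1, hN2, hN3⟩ := hall_separation H hH hg
  refine ⟨(fun x : FreeGroup α => (QuotientGroup.mk x : FreeGroup α ⧸ N)) ⁻¹'
      {QuotientGroup.mk g}, ?_, ?_, rfl⟩
  · intro x hx
    exact hN3 x hx
  · have h1 : profiniteTopology (FreeGroup α) ≤
        TopologicalSpace.induced
          (fun x : FreeGroup α => (QuotientGroup.mk x : FreeGroup α ⧸ N)) ⊥ :=
      le_trans (iInf_le _ N) (le_trans (iInf_le _ hN1) (iInf_le _ hN2))
    exact h1 _ ⟨{QuotientGroup.mk g}, trivial, rfl⟩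
end

section
/- For a finitely generated profinite monoid S, the pointwise-convergence topology and the compact-open topology coincide on the monoid End(S) of continuous endomorphisms of S, and End(S) with this topology is itself a profinite monoid such that the evaluation map End(S) × S → S, (φ, s) ↦ φ(s), is continuous. -/
open Set Topology

section Aux

/-- membership in the symmetric clopen entourage -/
lemma mem_symmV {S : Type*} {A : Set S} {x y : S} :
    (x, y) ∈ (A ×ˢ A ∪ Aᶜ ×ˢ Aᶜ) ↔ (x ∈ A ↔ y ∈ A) := by
  by_cases hx : x ∈ A <;> by_cases hy : y ∈ A <;> simp [hx, hy]

/-- clopen subsets of a product of profinite spaces decompose into clopen boxes -/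
lemma clopen_boxes {X Y : Type*} [TopologicalSpace X] [TopologicalSpace Y]
    [CompactSpace X] [T2Space X] [TotallyDisconnectedSpace X]
    [CompactSpace Y] [T2Space Y] [TotallyDisconnectedSpace Y]
    {W : Set (X × Y)} (hW : IsClopen W) :
    ∃ I : Finset {p : Set X × Set Y // IsClopen p.1 ∧ IsClopen p.2 ∧ p.1 ×ˢ p.2 ⊆ W},
      W ⊆ ⋃ i ∈ I, i.1.1 ×ˢ i.1.2 := by
  have hcov : W ⊆ ⋃ i : {p : Set X × Set Y // IsClopen p.1 ∧ IsClopen p.2 ∧ p.1 ×ˢ p.2 ⊆ W},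
      i.1.1 ×ˢ i.1.2 := by
    rintro ⟨x, y⟩ hw
    obtain ⟨u, v, hu, hv, hxu, hyv, huv⟩ := isOpen_prod_iff.1 hW.isOpen x y hw
    obtain ⟨a, ha, hxa, hau⟩ := compact_exists_isClopen_in_isOpen hu hxu
    obtain ⟨b, hb, hyb, hbv⟩ := compact_exists_isClopen_in_isOpen hv hyv
    refine mem_iUnion.2 ⟨⟨(a, b), ha, hb, ?_⟩, mk_mem_prod hxa hyb⟩
    exact fun p hp => huv ⟨hau hp.1, hbv hp.2⟩
  obtain ⟨I, hI⟩ := (hW.isClosed.isCompact).elim_finite_subcover _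
    (fun i : {p : Set X × Set Y // IsClopen p.1 ∧ IsClopen p.2 ∧ p.1 ×ˢ p.2 ⊆ W} =>
      (i.2.1.isOpen.prod i.2.2.1.isOpen)) hcov
  exact ⟨I, hI⟩

end Aux

section Syn

variable {S : Type*} [Monoid S] [TopologicalSpace S]
  [CompactSpace S] [T2Space S] [TotallyDisconnectedSpace S] [ContinuousMul S]

/-- The syntactic congruence of a clopen set is open (Numakura / Hunter). -/
lemma synOpen {U : Set S} (hU : IsClopen U) :
    IsOpen {p : S × S | ∀ x y, x * p.1 * y ∈ U ↔ x * p.2 * y ∈ U} := by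
  have hW : IsClopen {q : (S × S) × S | q.1.1 * q.2 * q.1.2 ∈ U} := by
    refine hU.preimage ?_
    exact (continuous_fst.fst.mul continuous_snd).mul continuous_fst.snd
  obtain ⟨I, hI⟩ := clopen_boxes hW
  -- pattern implies syntactic equivalence
  have key : ∀ a' a : S, (∀ i ∈ I, a' ∈ i.1.2 ↔ a ∈ i.1.2) →
      ∀ x y, x * a' * y ∈ U ↔ x * a * y ∈ U := by
    have mem_iff : ∀ x y c : S, x * c * y ∈ U ↔ ∃ i ∈ I, (x, y) ∈ i.1.1 ∧ c ∈ i.1.2 := by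
      intro x y c
      constructor
      · intro h
        have := hI (show ((x, y), c) ∈ _ from h)
        rcases mem_iUnion₂.1 this with ⟨i, hi, hmem⟩
        exact ⟨i, hi, hmem.1, hmem.2⟩
      · rintro ⟨i, hi, h1, h2⟩
        exact i.2.2.2 (mk_mem_prod h1 h2)
    intro a' a hpat x y
    rw [mem_iff, mem_iff]
    constructor
    · rintro ⟨i, hi, h1, h2⟩; exact ⟨i, hi, h1, (hpat i hi).1 h2⟩
    · rintro ⟨i, hi, h1, h2⟩; exact ⟨i, hi, h1, (hpat i hi).2 h2⟩
  rw [isOpen_iff_forall_mem_open]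
  rintro ⟨a, b⟩ hab
  have hcond : ∀ (A : Set S), IsClopen A → ∀ c : S, IsOpen {s : S | s ∈ A ↔ c ∈ A} := by
    intro A hA c
    by_cases hc : c ∈ A
    · have : {s : S | s ∈ A ↔ c ∈ A} = A := by ext s; simp [hc]
      rw [this]; exact hA.isOpen
    · have : {s : S | s ∈ A ↔ c ∈ A} = Aᶜ := by ext s; simp [hc]
      rw [this]; exact hA.compl.isOpen
  refine ⟨⋂ i ∈ I, ((Prod.fst ⁻¹' {s : S | s ∈ i.1.2 ↔ a ∈ i.1.2}) ∩
      (Prod.snd ⁻¹' {s : S | s ∈ i.1.2 ↔ b ∈ i.1.2})), ?_, ?_, ?_⟩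
  · rintro ⟨a', b'⟩ hp
    simp only [mem_iInter, mem_inter_iff, mem_preimage, mem_setOf_eq] at hp
    intro x y
    exact ((key a' a (fun i hi => (hp i hi).1) x y).trans (hab x y)).trans
      (key b' b (fun i hi => (hp i hi).2) x y).symm
  · exact isOpen_biInter_finset fun i hi =>
      ((hcond _ i.2.2.1 a).preimage continuous_fst).inter
        ((hcond _ i.2.2.1 b).preimage continuous_snd)
  · simp only [mem_iInter, mem_inter_iff, mem_preimage, mem_setOf_eq]
    exact fun i hi => ⟨trivial, trivial⟩

end Syn

section Master

variable {S : Type*} [Monoid S] [TopologicalSpace S]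
  [CompactSpace S] [T2Space S] [TotallyDisconnectedSpace S] [ContinuousMul S]

/-- Master equicontinuity lemma: every open neighborhood of the diagonal of a
finitely generated profinite monoid contains an open neighborhood of the diagonal
which is uniformly respected by all continuous endomorphisms. -/
lemma master (hfg : ∃ F : Finset S, Dense ((Submonoid.closure (F : Set S) : Submonoid S) : Set S))
    {V : Set (S × S)} (hV : IsOpen V) (hdiag : ∀ a : S, (a, a) ∈ V) :
    ∃ W : Set (S × S), IsOpen W ∧ (∀ a : S, (a, a) ∈ W) ∧ W ⊆ V ∧
      ∀ φ : S →* S, Continuous φ → ∀ a b : S, (a, b) ∈ W → (φ a, φ b) ∈ V := by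
  classical
  obtain ⟨F, hF⟩ := hfg
  -- Step 1: cover the diagonal by clopen squares inside V
  have hcov : ∀ a : S, ∃ i : {A : Set S // IsClopen A ∧ A ×ˢ A ⊆ V}, a ∈ i.1 := by
    intro a
    obtain ⟨u, v, hu, hv, hau, hav, huv⟩ := isOpen_prod_iff.1 hV a a (hdiag a)
    obtain ⟨A, hA, haA, hAsub⟩ := compact_exists_isClopen_in_isOpen (hu.inter hv) ⟨hau, hav⟩
    exact ⟨⟨A, hA, fun p hp => huv ⟨(hAsub hp.1).1, (hAsub hp.2).2⟩⟩, haA⟩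
  obtain ⟨T, hT⟩ := isCompact_univ.elim_finite_subcover
    (fun i : {A : Set S // IsClopen A ∧ A ×ˢ A ⊆ V} => i.1)
    (fun i => i.2.1.isOpen) (fun a _ => mem_iUnion.2 (hcov a))
  -- Step 2: the syntactic congruence of the covering sets
  set θ : Set (S × S) :=
    {p : S × S | ∀ i ∈ T, ∀ x y, x * p.1 * y ∈ i.1 ↔ x * p.2 * y ∈ i.1} with hθdef
  have hθopen : IsOpen θ := by
    have : θ = ⋂ i ∈ T, {p : S × S | ∀ x y, x * p.1 * y ∈ i.1 ↔ x * p.2 * y ∈ i.1} := by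
      ext p; simp [hθdef]
    rw [this]
    exact isOpen_biInter_finset fun i _ => synOpen i.2.1
  have hθV : θ ⊆ V := by
    rintro ⟨a, b⟩ hp
    rcases mem_iUnion₂.1 (hT (mem_univ a)) with ⟨i, hi, hai⟩
    have hbi : b ∈ i.1 := by
      have := (hp i hi 1 1)
      rw [one_mul, one_mul, mul_one, mul_one] at this
      exact this.1 hai
    exact i.2.2 (mk_mem_prod hai hbi)
  -- Step 3: θ as a congruence, with finite discrete quotient
  let c : Con S :=
    { r := fun a b => (a, b) ∈ θ
      iseqv := ⟨fun a i hi x y => Iff.rfl, fun h i hi x y => (h i hi x y).symm,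
        fun h1 h2 i hi x y => (h1 i hi x y).trans (h2 i hi x y)⟩
      mul' := by
        intro w x y z h1 h2 i hi u v
        rw [show u * (w * y) * v = u * w * (y * v) by simp [mul_assoc],
          show u * (x * z) * v = (u * x) * z * v by simp [mul_assoc]]
        refine (h1 i hi u (y * v)).trans ?_
        rw [show u * x * (y * v) = (u * x) * y * v by simp [mul_assoc]]
        exact h2 i hi (u * x) v }
  letI : TopologicalSpace c.Quotient := ⊥
  haveI : DiscreteTopology c.Quotient := ⟨rfl⟩
  have hfiber : ∀ z : c.Quotient, IsOpen {a : S | (a : c.Quotient) = z} := by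
    intro z
    obtain ⟨a₀, rfl⟩ := Con.mk'_surjective (c := c) z
    have : {a : S | (a : c.Quotient) = c.mk' a₀} = (fun a => (a, a₀)) ⁻¹' θ := by
      ext a
      rw [mem_setOf_eq, show c.mk' a₀ = (a₀ : c.Quotient) from rfl, Con.eq]
      exact Iff.rfl
    rw [this]
    exact hθopen.preimage (continuous_id.prodMk continuous_const)
  have hqcont : Continuous (fun a : S => (a : c.Quotient)) := by
    refine continuous_def.2 fun s _ => ?_
    have : (fun a : S => (a : c.Quotient)) ⁻¹' s = ⋃ z ∈ s, {a : S | (a : c.Quotient) = z} := by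
      ext a; simp
    rw [this]
    exact isOpen_biUnion fun z _ => hfiber z
  haveI hQfin : Finite c.Quotient := by
    obtain ⟨T', hT'⟩ := isCompact_univ.elim_finite_subcover
      (fun z : c.Quotient => {a : S | (a : c.Quotient) = z}) hfiber
      (fun a _ => mem_iUnion.2 ⟨(a : c.Quotient), rfl⟩)
    refine Set.finite_univ_iff.mp (T'.finite_toSet.subset fun z _ => ?_)
    obtain ⟨a₀, rfl⟩ := Con.mk'_surjective (c := c) z
    rcases mem_iUnion₂.1 (hT' (mem_univ a₀)) with ⟨w, hw, hmem⟩
    have : c.mk' a₀ = w := hmem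
    rwa [this]
  -- Step 4: finitely many continuous homomorphisms to the quotient
  haveI hHfin : Finite {h : S →* c.Quotient // Continuous h} := by
    refine Finite.of_injective
      (fun h : {h : S →* c.Quotient // Continuous h} => (fun x : F => h.1 x)) ?_
    intro h₁ h₂ hh
    have hFeq : Set.EqOn ⇑h₁.1 ⇑h₂.1 (F : Set S) := fun x hx => congrFun hh ⟨x, hx⟩
    have hClos : Set.EqOn ⇑h₁.1 ⇑h₂.1 ((Submonoid.closure (F : Set S) : Submonoid S) : Set S) :=
      MonoidHom.eqOn_closureM hFeq
    have := Continuous.ext_on hF h₁.2 h₂.2 hClos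
    exact Subtype.ext (MonoidHom.ext fun a => congrFun this a)
  -- Step 5: the intersection of all kernels
  refine ⟨⋂ h : {h : S →* c.Quotient // Continuous h}, {p : S × S | h.1 p.1 = h.1 p.2},
    ?_, ?_, ?_, ?_⟩
  · refine isOpen_iInter_of_finite fun h => ?_
    have : {p : S × S | h.1 p.1 = h.1 p.2}
        = ⋃ z : c.Quotient, (⇑h.1 ⁻¹' {z}) ×ˢ (⇑h.1 ⁻¹' {z}) := by
      ext ⟨a, b⟩
      simp only [mem_setOf_eq, mem_iUnion, mem_prod, mem_preimage, mem_singleton_iff]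
      exact ⟨fun he => ⟨h.1 b, he, rfl⟩, fun ⟨z, h1, h2⟩ => h1.trans h2.symm⟩
    rw [this]
    exact isOpen_iUnion fun z =>
      ((isOpen_discrete _).preimage h.2).prod ((isOpen_discrete _).preimage h.2)
  · exact fun a => mem_iInter.2 fun h => rfl
  · intro p hp
    have := mem_iInter.1 hp ⟨c.mk', hqcont⟩
    have hcp : c p.1 p.2 := (c.eq).1 this
    exact hθV hcp
  · intro φ hφ a b hab
    have := mem_iInter.1 hab ⟨c.mk'.comp φ, hqcont.comp hφ⟩
    have hcp : c (φ a) (φ b) := (c.eq).1 this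
    exact hθV hcp

end Master

/-- The compact-open topology is finer than the pointwise topology, for any family. -/
lemma tc_le_tp_aux {X : Type*} [TopologicalSpace X] {E' : Type*} (f : E' → C(X, X)) :
    TopologicalSpace.induced f ContinuousMap.compactOpen ≤
      TopologicalSpace.induced (fun e => ⇑(f e)) Pi.topologicalSpace := by
  letI : TopologicalSpace E' := TopologicalSpace.induced f ContinuousMap.compactOpen
  refine continuous_iff_le_induced.mp ?_
  exact continuous_pi fun s => (continuous_eval_const s).comp continuous_induced_dom

/-- For a finitely generated profinite monoid `S`, the pointwise-convergence and
compact-open topologies coincide on the monoid `End S` of continuous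
endomorphisms of `S`, and with this topology `End S` is a profinite monoid
(compact, Hausdorff, zero-dimensional, with continuous composition) such that
the evaluation map `End S × S → S` is continuous. -/
theorem end_profinite_monoid {S : Type*} [Monoid S] [TopologicalSpace S]
    [CompactSpace S] [T2Space S] [TotallyDisconnectedSpace S] [ContinuousMul S]
    (hfg : ∃ F : Finset S, Dense ((Submonoid.closure (F : Set S) : Submonoid S) : Set S)) :
    letI E := {f : S →* S // Continuous f}
    letI tp : TopologicalSpace E :=
      TopologicalSpace.induced (fun φ : E => (⇑φ.1 : S → S)) Pi.topologicalSpace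
    letI tc : TopologicalSpace E :=
      TopologicalSpace.induced (fun φ : E => ContinuousMap.mk (⇑φ.1) φ.2)
        ContinuousMap.compactOpen
    tp = tc ∧
    @CompactSpace E tp ∧ @T2Space E tp ∧ @TotallyDisconnectedSpace E tp ∧
    -- composition (the monoid multiplication of End S) is continuous
    @Continuous (E × E) E (@instTopologicalSpaceProd E E tp tp) tp
      (fun p => ⟨p.1.1.comp p.2.1, p.1.2.comp p.2.2⟩) ∧
    -- the evaluation map is continuous
    @Continuous (E × S) S (@instTopologicalSpaceProd E S tp _) _
      (fun p => p.1.1 p.2) := by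
  classical
  set E := {f : S →* S // Continuous f} with hE
  letI tp : TopologicalSpace E :=
    TopologicalSpace.induced (fun φ : E => (⇑φ.1 : S → S)) Pi.topologicalSpace
  -- the key equicontinuity data, one entourage for each clopen set
  have key : ∀ A : {A : Set S // IsClopen A}, ∃ W : Set (S × S), IsOpen W ∧
      (∀ a : S, (a, a) ∈ W) ∧
      ∀ φ : S →* S, Continuous φ → ∀ a b : S, (a, b) ∈ W → (φ a ∈ A.1 ↔ φ b ∈ A.1) := by
    rintro ⟨A, hA⟩
    have hV : IsOpen (A ×ˢ A ∪ Aᶜ ×ˢ Aᶜ) :=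
      (hA.isOpen.prod hA.isOpen).union (hA.compl.isOpen.prod hA.compl.isOpen)
    have hdiag : ∀ a : S, (a, a) ∈ (A ×ˢ A ∪ Aᶜ ×ˢ Aᶜ) := fun a => mem_symmV.2 Iff.rfl
    obtain ⟨W, hWo, hWd, _, hWk⟩ := master hfg hV hdiag
    exact ⟨W, hWo, hWd, fun φ hφ a b hab => mem_symmV.1 (hWk φ hφ a b hab)⟩
  choose W hWopen hWdiag hWkey using key
  -- basic continuity facts
  have hevalc : ∀ s : S, Continuous (fun φ : E => φ.1 s) :=
    fun s => (continuous_apply s).comp continuous_induced_dom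
  have hinj : Function.Injective (fun φ : E => (⇑φ.1 : S → S)) := by
    intro φ₁ φ₂ h
    exact Subtype.ext (MonoidHom.ext fun a => congrFun h a)
  have hemb : Topology.IsEmbedding (fun φ : E => (⇑φ.1 : S → S)) :=
    ⟨Topology.IsInducing.induced _, hinj⟩
  -- the range of the coercion is closed
  have hrange : Set.range (fun φ : E => (⇑φ.1 : S → S)) =
      {f : S → S | f 1 = 1} ∩ (⋂ (a : S) (b : S), {f : S → S | f (a * b) = f a * f b}) ∩
      ⋂ (A : {A : Set S // IsClopen A}) (a : S) (b : S),
        {f : S → S | (a, b) ∈ W A → (f a ∈ A.1 ↔ f b ∈ A.1)} := by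
    ext f
    constructor
    · rintro ⟨φ, rfl⟩
      refine ⟨⟨φ.1.map_one, ?_⟩, ?_⟩
      · simp only [mem_iInter, mem_setOf_eq]
        exact fun a b => φ.1.map_mul a b
      · simp only [mem_iInter, mem_setOf_eq]
        exact fun A a b hab => hWkey A φ.1 φ.2 a b hab
    · rintro ⟨⟨h1, hmul⟩, hW⟩
      simp only [mem_iInter, mem_setOf_eq] at h1 hmul hW
      have hfc : Continuous f := by
        refine isTopologicalBasis_isClopen.continuous_iff.2 fun A hA => ?_
        rw [isOpen_iff_forall_mem_open]
        intro a ha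
        refine ⟨{b : S | (a, b) ∈ W ⟨A, hA⟩}, fun b hb => (hW ⟨A, hA⟩ a b hb).1 ha, ?_,
          hWdiag ⟨A, hA⟩ a⟩
        exact (hWopen _).preimage (continuous_const.prodMk continuous_id)
      exact ⟨⟨{ toFun := f, map_one' := h1, map_mul' := hmul }, hfc⟩, rfl⟩
  have hclosed : IsClosed (Set.range (fun φ : E => (⇑φ.1 : S → S))) := by
    rw [hrange]
    refine IsClosed.inter (IsClosed.inter ?_ ?_) ?_
    · exact isClosed_eq (continuous_apply 1) continuous_const
    · exact isClosed_iInter fun a => isClosed_iInter fun b =>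
        isClosed_eq (continuous_apply (a * b)) ((continuous_apply a).mul (continuous_apply b))
    · refine isClosed_iInter fun A => isClosed_iInter fun a => isClosed_iInter fun b => ?_
      by_cases hab : (a, b) ∈ W A
      · have : {f : S → S | (a, b) ∈ W A → (f a ∈ A.1 ↔ f b ∈ A.1)}
            = (fun f : S → S => (f a, f b)) ⁻¹' (A.1 ×ˢ A.1 ∪ (A.1)ᶜ ×ˢ (A.1)ᶜ) := by
          ext f
          simp only [mem_setOf_eq, mem_preimage, hab, true_implies]
          exact mem_symmV.symm
        rw [this]
        refine IsClosed.preimage ((continuous_apply a).prodMk (continuous_apply b)) ?_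
        exact ((A.2.isClosed.prod A.2.isClosed).union
          (A.2.compl.isClosed.prod A.2.compl.isClosed))
      · have : {f : S → S | (a, b) ∈ W A → (f a ∈ A.1 ↔ f b ∈ A.1)} = Set.univ := by
          ext f; simp [hab]
        rw [this]; exact isClosed_univ
  have hclemb : Topology.IsClosedEmbedding (fun φ : E => (⇑φ.1 : S → S)) := ⟨hemb, hclosed⟩
  haveI hcmp : CompactSpace E := hclemb.compactSpace
  haveI ht2 : T2Space E := hemb.t2Space
  haveI htd : TotallyDisconnectedSpace E :=
    ⟨hemb.isTotallyDisconnected (isTotallyDisconnected_of_totallyDisconnectedSpace _)⟩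
  -- evaluation is continuous
  have hevalC : Continuous (fun p : E × S => p.1.1 p.2) := by
    rw [continuous_iff_continuousAt]
    rintro ⟨φ₀, s₀⟩
    intro O hO
    obtain ⟨A, hA, hmem, hAO⟩ := isTopologicalBasis_isClopen.mem_nhds_iff.1 hO
    rw [Filter.mem_map, nhds_prod_eq]
    refine Filter.mem_of_superset (Filter.prod_mem_prod
      (IsOpen.mem_nhds ((hA.isOpen.preimage (hevalc s₀))) hmem)
      (IsOpen.mem_nhds ((hWopen ⟨A, hA⟩).preimage (continuous_const.prodMk continuous_id))
        (hWdiag ⟨A, hA⟩ s₀))) ?_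
    rintro ⟨φ, s⟩ ⟨h1, h2⟩
    exact hAO ((hWkey ⟨A, hA⟩ φ.1 φ.2 s₀ s h2).1 h1)
  -- composition is continuous
  have hcompC : Continuous (fun p : E × E => (⟨p.1.1.comp p.2.1, p.1.2.comp p.2.2⟩ : E)) := by
    refine continuous_induced_rng.2 (continuous_pi fun s => ?_)
    show Continuous fun p : E × E => p.1.1 (p.2.1 s)
    exact hevalC.comp (continuous_fst.prodMk ((hevalc s).comp continuous_snd))
  -- the two topologies agree
  have heq : tp = TopologicalSpace.induced
      (fun φ : E => ContinuousMap.mk (⇑φ.1) φ.2) ContinuousMap.compactOpen := by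
    refine le_antisymm ?_ (tc_le_tp_aux _)
    refine continuous_iff_le_induced.mp ?_
    refine ContinuousMap.continuous_compactOpen.2 fun K hK U hU => ?_
    rw [isOpen_iff_forall_mem_open]
    intro φ₀ hφ₀
    have himg : IsCompact (⇑φ₀.1 '' K) := hK.image φ₀.2
    have hsub : ⇑φ₀.1 '' K ⊆ U := by
      rintro y ⟨x, hx, rfl⟩; exact hφ₀ hx
    -- sandwich a clopen set between the compact image and U
    obtain ⟨A, hA, hCA, hAU⟩ : ∃ A : Set S, IsClopen A ∧ ⇑φ₀.1 '' K ⊆ A ∧ A ⊆ U := by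
      have hx : ∀ x : S, x ∈ ⇑φ₀.1 '' K → ∃ i : {A : Set S // IsClopen A ∧ A ⊆ U}, x ∈ i.1 := by
        intro x hx
        obtain ⟨B, hB, hxB, hBU⟩ := compact_exists_isClopen_in_isOpen hU (hsub hx)
        exact ⟨⟨B, hB, hBU⟩, hxB⟩
      obtain ⟨t, ht⟩ := himg.elim_finite_subcover
        (fun i : {A : Set S // IsClopen A ∧ A ⊆ U} => i.1)
        (fun i => i.2.1.isOpen) (fun x hxm => mem_iUnion.2 (hx x hxm))
      exact ⟨⋃ i ∈ t, i.1, isClopen_biUnion_finset fun i _ => i.2.1, ht,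
        Set.iUnion₂_subset fun i _ => i.2.2⟩
    obtain ⟨t, htK, htcov⟩ := hK.elim_nhds_subcover (fun k => {b : S | (k, b) ∈ W ⟨A, hA⟩})
      (fun k hk => IsOpen.mem_nhds
        ((hWopen _).preimage (continuous_const.prodMk continuous_id)) (hWdiag _ k))
    refine ⟨{φ : E | ∀ k ∈ t, φ.1 k ∈ A}, ?_, ?_, ?_⟩
    · intro φ hφ x hx
      rcases mem_iUnion₂.1 (htcov hx) with ⟨k, hk, hxk⟩
      exact hAU ((hWkey ⟨A, hA⟩ φ.1 φ.2 k x hxk).1 (hφ k hk))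
    · have : {φ : E | ∀ k ∈ t, φ.1 k ∈ A} = ⋂ k ∈ t, (fun φ : E => φ.1 k) ⁻¹' A := by
        ext φ; simp
      rw [this]
      exact isOpen_biInter_finset fun k _ => hA.isOpen.preimage (hevalc k)
    · exact fun k hk => hCA ⟨k, htK k hk, rfl⟩
  exact ⟨heq, hcmp, ht2, htd, hcompC, hevalC⟩
end
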